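/- Let G' be the Type A Whitney flip of a simple graph G along (H, v1, v2), and let φ be the map sending each edge {x, y} of G with both endpoints in H to {σ(x), σ(y)} and fixing every other edge of G. Then φ is a bijection from the edge set of G onto the edge set of G', and a set C of edges of G is the edge set of a cycle of G if and only if φ(C) is the edge set of a cycle of G'. In particular, for every integer k, G has a cycle of length k if and only if G' has a cycle of length k. -/

import Mathlib

open SimpleGraph

attribute [local instance] Classical.propDecidable

/-- The Type A Whitney flip of `G` along `(H, v1, v2)`: edges with both endpoints in `H`
are mapped by the swap of `v1` and `v2`; all other edges are kept. -/
def typeAFlip {V : Type*} [DecidableEq V] (G : SimpleGraph V) (v1 v2 : V) (H : Set V) :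
    SimpleGraph V where
  Adj a b :=
    (Equiv.swap v1 v2 a ∈ H ∧ Equiv.swap v1 v2 b ∈ H ∧
      G.Adj (Equiv.swap v1 v2 a) (Equiv.swap v1 v2 b)) ∨
    (¬(a ∈ H ∧ b ∈ H) ∧ G.Adj a b)
  symm := by
    constructor
    rintro a b (⟨ha, hb, h⟩ | ⟨hn, h⟩)
    · exact Or.inl ⟨hb, ha, h.symm⟩
    · exact Or.inr ⟨fun ⟨hb', ha'⟩ => hn ⟨ha', hb'⟩, h.symm⟩
  loopless := by
    constructor
    rintro a (⟨_, _, h⟩ | ⟨_, h⟩) <;> exact G.loopless.irrefl _ h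

/-- The edge map of the Type A Whitney flip: an edge with both endpoints in `H` is mapped
by the swap of `v1` and `v2`; every other edge is fixed. -/
noncomputable def phiA {V : Type*} [DecidableEq V] (v1 v2 : V) (H : Set V)
    (e : Sym2 V) : Sym2 V :=
  if ∀ x ∈ e, x ∈ H then e.map (Equiv.swap v1 v2) else e

/-!
At a vertex of `H` other than `v1, v2` every edge of `G` stays inside `H`, and at a vertex
outside `H` no edge lies inside `H`; so along a cycle the edges pass between inside and outside
of `H` only at `v1` and `v2`. Hence a cycle of `G` lies entirely inside `H`, and its swap is a
cycle of the flip; or entirely outside, and it is a cycle of the flip as it stands; or it runs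
through `v1` and `v2` and splits there into a path `P` from `v1` to `v2` inside `H` and a path
`Q` back outside `H`, and then the swap of `P` followed by `Q` reversed is a cycle of the flip
with the image edge set. Since the flip is an involution, with `phiA` as its edge involution,
the converse and the bijection of edge sets follow.
-/

lemma Set.mem_sym2_iff_forall {α : Type*} {s : Set α} {e : Sym2 α} :
    e ∈ s.sym2 ↔ ∀ x ∈ e, x ∈ s := by
  induction e using Sym2.ind
  simp

section

variable {V : Type*} {G : SimpleGraph V} {v1 v2 : V} {H : Set V}

/-- `{v1, v2}` separates the rest of `H` from the outside of `H`. -/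
def PairSeparates (G : SimpleGraph V) (v1 v2 : V) (H : Set V) : Prop :=
  ∀ x y : V, G.Adj x y → x ∈ H \ ({v1, v2} : Set V) → y ∈ H

lemma mem_sym2_iff_of_adj_of_adj (hG : PairSeparates G v1 v2 H) {a b d : V} (hab : G.Adj a b)
    (hbd : G.Adj b d) (hb : b ≠ v1 ∧ b ≠ v2) : s(a, b) ∈ H.sym2 ↔ s(b, d) ∈ H.sym2 := by
  by_cases hbH : b ∈ H
  · have hbS : b ∈ H \ ({v1, v2} : Set V) := by simpa [hbH] using hb
    simp [hG b a hab.symm hbS, hbH, hG b d hbd hbS]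
  · simp [hbH]

namespace SimpleGraph.Walk

variable {a b : V}

def IsInside (H : Set V) (p : G.Walk a b) : Prop := ∀ e ∈ p.edges, e ∈ H.sym2

def IsOutside (H : Set V) (p : G.Walk a b) : Prop := ∀ e ∈ p.edges, e ∉ H.sym2

lemma ne_of_mem_dropLast_tail_support {p : G.Walk a b} (hp : p.support.tail.Nodup) {x : V}
    (hx : x ∈ p.support.tail.dropLast) : x ≠ b := by
  cases p with
  | nil => simp at hx
  | cons h q =>
    rw [support_cons, List.tail_cons, ← dropLast_support_concat q] at hp
    rw [support_cons, List.tail_cons] at hx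
    rintro rfl
    exact List.disjoint_of_nodup_append hp hx (List.mem_singleton_self x)

lemma IsPath.ne_of_mem_tail_support {p : G.Walk a b} (hp : p.IsPath) {x : V}
    (hx : x ∈ p.support.tail) : x ≠ a := by
  have hnd := hp.support_nodup
  rw [← cons_tail_support, List.nodup_cons] at hnd
  exact fun hxa => hnd.1 (hxa ▸ hx)

lemma IsPath.ne_of_mem_dropLast_tail_support {p : G.Walk a b} (hp : p.IsPath) {x : V}
    (hx : x ∈ p.support.tail.dropLast) : x ≠ a ∧ x ≠ b :=
  ⟨hp.ne_of_mem_tail_support (List.dropLast_subset _ hx),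
    Walk.ne_of_mem_dropLast_tail_support hp.support_nodup.tail hx⟩

lemma IsPath.isCycle_append_of_disjoint {p : G.Walk a b} {q : G.Walk b a} (hp : p.IsPath)
    (hq : q.IsPath) (hnil : ¬p.Nil) (hedges : p.edges.Disjoint q.edges)
    (hsupport : p.support.tail.Disjoint q.support.tail) : (p.append q).IsCycle := by
  rw [isCycle_def, isTrail_def, edges_append, tail_support_append, List.nodup_append',
    List.nodup_append']
  exact ⟨⟨hp.isTrail.edges_nodup, hq.isTrail.edges_nodup, hedges⟩,
    fun h => hnil (by simpa using congrArg length h : p.Nil ∧ q.Nil).1,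
    ⟨hp.support_nodup.tail, hq.support_nodup.tail, hsupport⟩⟩

/-- `p.support.tail.dropLast` lists the interior vertices of `p`; whether an edge lies inside `H`
can change only at `v1` or `v2`. -/
theorem isInside_or_isOutside (hG : PairSeparates G v1 v2 H) (p : G.Walk a b)
    (hp : ∀ x ∈ p.support.tail.dropLast, x ≠ v1 ∧ x ≠ v2) : p.IsInside H ∨ p.IsOutside H := by
  induction p with
  | nil => exact Or.inl (by simp [IsInside])
  | @cons a d b h q ih =>
    cases q with
    | nil =>
      by_cases hH : s(a, d) ∈ H.sym2
      · exact Or.inl (by simpa [IsInside] using hH)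
      · exact Or.inr (by simpa [IsOutside] using hH)
    | @cons _ e _ h' q =>
      have hq : ∀ x ∈ q.support.dropLast, x ≠ v1 ∧ x ≠ v2 := fun x hx =>
        hp x (by simp [List.dropLast_cons_of_ne_nil q.support_ne_nil, hx])
      have hd : d ≠ v1 ∧ d ≠ v2 := hp d (by simp [List.dropLast_cons_of_ne_nil q.support_ne_nil])
      have key := mem_sym2_iff_of_adj_of_adj hG h h' hd
      rcases ih (by simpa using hq) with hin | hout
      · exact Or.inl (List.forall_mem_cons.mpr ⟨key.mpr (hin _ List.mem_cons_self), hin⟩)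
      · exact Or.inr (List.forall_mem_cons.mpr ⟨mt key.mp (hout _ List.mem_cons_self), hout⟩)

end SimpleGraph.Walk

end

section

variable {V : Type*} [DecidableEq V] {G : SimpleGraph V} {v1 v2 : V} {H : Set V}

lemma swap_apply_mem_iff (h1 : v1 ∈ H) (h2 : v2 ∈ H) {x : V} :
    Equiv.swap v1 v2 x ∈ H ↔ x ∈ H := by
  rw [Equiv.swap_apply_def]
  split_ifs <;> simp_all

lemma map_swap_mem_sym2_iff (h1 : v1 ∈ H) (h2 : v2 ∈ H) {e : Sym2 V} :
    e.map (Equiv.swap v1 v2) ∈ H.sym2 ↔ e ∈ H.sym2 := by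
  induction e using Sym2.ind
  simp [swap_apply_mem_iff h1 h2]

lemma typeAFlip_adj {a b : V} :
    (typeAFlip G v1 v2 H).Adj a b ↔
      (Equiv.swap v1 v2 a ∈ H ∧ Equiv.swap v1 v2 b ∈ H ∧
        G.Adj (Equiv.swap v1 v2 a) (Equiv.swap v1 v2 b)) ∨
      (¬(a ∈ H ∧ b ∈ H) ∧ G.Adj a b) := Iff.rfl

lemma typeAFlip_typeAFlip (h1 : v1 ∈ H) (h2 : v2 ∈ H) :
    typeAFlip (typeAFlip G v1 v2 H) v1 v2 H = G := by
  ext a b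
  simp only [typeAFlip_adj, swap_apply_mem_iff h1 h2, Equiv.swap_apply_self]
  tauto

lemma PairSeparates.typeAFlip (hG : PairSeparates G v1 v2 H) (h1 : v1 ∈ H) (h2 : v2 ∈ H) :
    PairSeparates (typeAFlip G v1 v2 H) v1 v2 H := by
  intro x y hxy hx
  rcases hxy with ⟨-, hy, -⟩ | ⟨-, hxy⟩
  · exact (swap_apply_mem_iff h1 h2).mp hy
  · exact hG x y hxy hx

lemma map_swap_mem_edgeSet_typeAFlip {e : Sym2 V} (he : e ∈ G.edgeSet) (hH : e ∈ H.sym2) :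
    e.map (Equiv.swap v1 v2) ∈ (typeAFlip G v1 v2 H).edgeSet := by
  induction e using Sym2.ind
  simp only [Sym2.map_mk, mem_edgeSet, typeAFlip_adj, Equiv.swap_apply_self]
  exact Or.inl ⟨hH.1, hH.2, he⟩

lemma mem_edgeSet_typeAFlip_of_notMem_sym2 {e : Sym2 V} (he : e ∈ G.edgeSet)
    (hH : e ∉ H.sym2) : e ∈ (typeAFlip G v1 v2 H).edgeSet := by
  induction e using Sym2.ind
  exact Or.inr ⟨hH, he⟩

lemma phiA_of_mem_sym2 {e : Sym2 V} (hH : e ∈ H.sym2) :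
    phiA v1 v2 H e = e.map (Equiv.swap v1 v2) :=
  if_pos (Set.mem_sym2_iff_forall.mp hH)

lemma phiA_of_notMem_sym2 {e : Sym2 V} (hH : e ∉ H.sym2) : phiA v1 v2 H e = e :=
  if_neg (mt Set.mem_sym2_iff_forall.mpr hH)

lemma phiA_involutive (h1 : v1 ∈ H) (h2 : v2 ∈ H) : Function.Involutive (phiA v1 v2 H) := by
  intro e
  by_cases hH : e ∈ H.sym2
  · rw [phiA_of_mem_sym2 hH, phiA_of_mem_sym2 ((map_swap_mem_sym2_iff h1 h2).mpr hH),
      Sym2.map_map]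
    induction e using Sym2.ind
    simp [Equiv.swap_apply_self]
  · rw [phiA_of_notMem_sym2 hH, phiA_of_notMem_sym2 hH]

lemma phiA_mem_edgeSet_typeAFlip {e : Sym2 V} (he : e ∈ G.edgeSet) :
    phiA v1 v2 H e ∈ (typeAFlip G v1 v2 H).edgeSet := by
  by_cases hH : e ∈ H.sym2
  · rw [phiA_of_mem_sym2 hH]
    exact map_swap_mem_edgeSet_typeAFlip he hH
  · rw [phiA_of_notMem_sym2 hH]
    exact mem_edgeSet_typeAFlip_of_notMem_sym2 he hH

lemma bijOn_phiA_edgeSet (h1 : v1 ∈ H) (h2 : v2 ∈ H) :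
    Set.BijOn (phiA v1 v2 H) G.edgeSet (typeAFlip G v1 v2 H).edgeSet := by
  have hinv := phiA_involutive h1 h2
  refine Set.InvOn.bijOn ⟨hinv.leftInverse.leftInvOn _, hinv.rightInverse.rightInvOn _⟩
    (fun e he => phiA_mem_edgeSet_typeAFlip he) fun e he => ?_
  have := phiA_mem_edgeSet_typeAFlip (v1 := v1) (v2 := v2) (H := H) he
  rwa [typeAFlip_typeAFlip h1 h2] at this

namespace SimpleGraph.Walk

variable {a b u : V}

lemma IsCycle.isInside_or_isOutside (hG : PairSeparates G v1 v2 H) {c : G.Walk u u}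
    (hc : c.IsCycle) {w : V} (hw : w ∈ c.support)
    (hS : ∀ x ∈ c.support, x = v1 ∨ x = v2 → x = w) : c.IsInside H ∨ c.IsOutside H := by
  have hperm := (c.rotate_edges w hw).perm
  have hint : ∀ x ∈ (c.rotate w hw).support.tail.dropLast, x ≠ v1 ∧ x ≠ v2 := by
    intro x hx
    have hxw := ne_of_mem_dropLast_tail_support (hc.rotate hw).support_nodup hx
    have hxc : x ∈ c.support := (c.mem_support_rotate_iff w hw).mp
      (List.mem_of_mem_tail (List.dropLast_subset _ hx))
    exact not_or.mp fun hxS => hxw (hS x hxc hxS)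
  rcases (c.rotate w hw).isInside_or_isOutside hG hint with hin | hout
  · exact Or.inl fun e he => hin e (hperm.mem_iff.mpr he)
  · exact Or.inr fun e he => hout e (hperm.mem_iff.mpr he)

variable (v1 v2) in
def swapToTypeAFlip (p : G.Walk a b) (hp : p.IsInside H) :
    (typeAFlip G v1 v2 H).Walk (Equiv.swap v1 v2 a) (Equiv.swap v1 v2 b) :=
  (p.map (Iso.map (Equiv.swap v1 v2) G).toHom).transfer _ fun e he => by
    rw [edges_map] at he
    obtain ⟨e, he', rfl⟩ := List.mem_map.mp he
    exact map_swap_mem_edgeSet_typeAFlip (p.edges_subset_edgeSet he') (hp e he')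

@[simp]
lemma support_swapToTypeAFlip (p : G.Walk a b) (hp : p.IsInside H) :
    (p.swapToTypeAFlip v1 v2 hp).support = p.support.map (Equiv.swap v1 v2) :=
  (support_transfer ..).trans (support_map ..)

@[simp]
lemma edges_swapToTypeAFlip (p : G.Walk a b) (hp : p.IsInside H) :
    (p.swapToTypeAFlip v1 v2 hp).edges = p.edges.map (Sym2.map (Equiv.swap v1 v2)) :=
  (edges_transfer ..).trans (edges_map ..)

lemma IsPath.swapToTypeAFlip {p : G.Walk a b} (hp : p.IsPath) (hin : p.IsInside H) :
    (p.swapToTypeAFlip v1 v2 hin).IsPath :=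
  (hp.map (Equiv.swap v1 v2).injective).transfer _

lemma IsCycle.swapToTypeAFlip {c : G.Walk u u} (hc : c.IsCycle) (hin : c.IsInside H) :
    (c.swapToTypeAFlip v1 v2 hin).IsCycle :=
  (hc.map (Equiv.swap v1 v2).injective).transfer _

lemma IsCycle.exists_typeAFlip_of_isInside {c : G.Walk u u} (hc : c.IsCycle)
    (hin : c.IsInside H) :
    ∃ u', ∃ c' : (typeAFlip G v1 v2 H).Walk u' u', c'.IsCycle ∧
      c'.edges.Perm (c.edges.map (phiA v1 v2 H)) :=
  ⟨_, c.swapToTypeAFlip v1 v2 hin, hc.swapToTypeAFlip hin, .of_eq <| by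
    rw [edges_swapToTypeAFlip, List.map_congr_left fun e he => phiA_of_mem_sym2 (hin e he)]⟩

lemma IsCycle.exists_typeAFlip_of_isOutside {c : G.Walk u u} (hc : c.IsCycle)
    (hout : c.IsOutside H) :
    ∃ u', ∃ c' : (typeAFlip G v1 v2 H).Walk u' u', c'.IsCycle ∧
      c'.edges.Perm (c.edges.map (phiA v1 v2 H)) := by
  have hE : ∀ e ∈ c.edges, e ∈ (typeAFlip G v1 v2 H).edgeSet := fun e he =>
    mem_edgeSet_typeAFlip_of_notMem_sym2 (c.edges_subset_edgeSet he) (hout e he)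
  refine ⟨u, c.transfer _ hE, hc.transfer hE, .of_eq ?_⟩
  rw [edges_transfer, List.map_congr_left fun e he => phiA_of_notMem_sym2 (hout e he),
    List.map_id']

lemma IsCycle.disjoint_tail_map_swap_support (hne : v1 ≠ v2) {P : G.Walk v1 v2}
    {Q : G.Walk v2 v1} (hc : (P.append Q).IsCycle) :
    (P.support.map (Equiv.swap v1 v2)).tail.Disjoint Q.reverse.support.tail := by
  intro x hxP hxQ
  have hPpath : P.IsPath := hc.isPath_of_append_left (not_nil_of_ne hne.symm)
  have hQpath : Q.IsPath := hc.isPath_of_append_right (not_nil_of_ne hne)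
  have hx1 : x ≠ v1 := hQpath.reverse.ne_of_mem_tail_support hxQ
  rw [← List.map_tail, List.mem_map] at hxP
  obtain ⟨y, hy, rfl⟩ := hxP
  have hy1 : y ≠ v1 := hPpath.ne_of_mem_tail_support hy
  have hy2 : y ≠ v2 := fun h => hx1 (by rw [h, Equiv.swap_apply_right])
  rw [Equiv.swap_apply_of_ne_of_ne hy1 hy2] at hxQ
  rw [support_reverse, List.tail_reverse, List.mem_reverse] at hxQ
  have hyQ : y ∈ Q.support.tail :=
    ((mem_support_iff Q).mp (List.dropLast_subset _ hxQ)).resolve_left hy2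
  have hnd := hc.support_nodup
  rw [tail_support_append] at hnd
  exact List.disjoint_of_nodup_append hnd hy hyQ

/-- The flipped cycle runs through `P` swapped, from `v2` back to `v1`, and returns along `Q`
reversed; interior vertices of `P` are fixed by the swap, so no vertex is repeated. -/
lemma IsCycle.exists_typeAFlip_of_append (hne : v1 ≠ v2) (h1 : v1 ∈ H) (h2 : v2 ∈ H)
    {P : G.Walk v1 v2} {Q : G.Walk v2 v1} (hc : (P.append Q).IsCycle) (hP : P.IsInside H)
    (hQ : Q.IsOutside H) :
    ∃ u', ∃ c' : (typeAFlip G v1 v2 H).Walk u' u', c'.IsCycle ∧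
      c'.edges.Perm ((P.append Q).edges.map (phiA v1 v2 H)) := by
  have hQE : ∀ e ∈ Q.reverse.edges, e ∈ (typeAFlip G v1 v2 H).edgeSet := fun e he =>
    mem_edgeSet_typeAFlip_of_notMem_sym2 (Q.reverse.edges_subset_edgeSet he)
      (hQ e (by simpa using he))
  let P' : (typeAFlip G v1 v2 H).Walk v2 v1 := (P.swapToTypeAFlip v1 v2 hP).copy
    (Equiv.swap_apply_left v1 v2) (Equiv.swap_apply_right v1 v2)
  let Q' : (typeAFlip G v1 v2 H).Walk v1 v2 := Q.reverse.transfer _ hQE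
  have hP' : P'.IsPath := (isPath_copy ..).mpr <|
    (hc.isPath_of_append_left (not_nil_of_ne hne.symm)).swapToTypeAFlip hP
  have hQ' : Q'.IsPath := (hc.isPath_of_append_right (not_nil_of_ne hne)).reverse.transfer hQE
  have hedges : P'.edges.Disjoint Q'.edges := by
    simp only [P', Q', edges_copy, edges_swapToTypeAFlip, edges_transfer, edges_reverse]
    intro e heP heQ
    obtain ⟨e, he, rfl⟩ := List.mem_map.mp heP
    exact hQ _ (List.mem_reverse.mp heQ) ((map_swap_mem_sym2_iff h1 h2).mpr (hP e he))
  have hsupport : P'.support.tail.Disjoint Q'.support.tail := by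
    simpa only [P', Q', support_copy, support_swapToTypeAFlip, support_transfer]
      using hc.disjoint_tail_map_swap_support hne
  refine ⟨v2, P'.append Q', hP'.isCycle_append_of_disjoint hQ' (not_nil_of_ne hne.symm) hedges
    hsupport, ?_⟩
  simp only [P', Q', edges_append, edges_copy, edges_swapToTypeAFlip, edges_transfer,
    edges_reverse, List.map_append]
  rw [List.map_congr_left fun e he => phiA_of_mem_sym2 (hP e he),
    List.map_congr_left fun e he => phiA_of_notMem_sym2 (hQ e he), List.map_id']
  exact List.Perm.append_left _ (List.reverse_perm _)

lemma IsCycle.exists_typeAFlip_of_split (hne : v1 ≠ v2) (h1 : v1 ∈ H) (h2 : v2 ∈ H)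
    (hG : PairSeparates G v1 v2 H) {P : G.Walk v1 v2} {Q : G.Walk v2 v1}
    (hc : (P.append Q).IsCycle) :
    ∃ u', ∃ c' : (typeAFlip G v1 v2 H).Walk u' u', c'.IsCycle ∧
      c'.edges.Perm ((P.append Q).edges.map (phiA v1 v2 H)) := by
  have hPpath : P.IsPath := hc.isPath_of_append_left (not_nil_of_ne hne.symm)
  have hQpath : Q.IsPath := hc.isPath_of_append_right (not_nil_of_ne hne)
  rcases P.isInside_or_isOutside hG fun x hx => hPpath.ne_of_mem_dropLast_tail_support hx
    with hPin | hPout <;>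
  rcases Q.isInside_or_isOutside hG fun x hx => (hQpath.ne_of_mem_dropLast_tail_support hx).symm
    with hQin | hQout
  · refine hc.exists_typeAFlip_of_isInside fun e he => ?_
    rw [edges_append, List.mem_append] at he
    exact he.elim (hPin e) (hQin e)
  · exact hc.exists_typeAFlip_of_append hne h1 h2 hPin hQout
  · have hc' : (Q.reverse.append P.reverse).IsCycle := reverse_append P Q ▸ hc.reverse
    obtain ⟨u', c', hc'', hperm⟩ := hc'.exists_typeAFlip_of_append hne h1 h2
      (fun e he => hQin e (by simpa using he)) (fun e he => hPout e (by simpa using he))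
    refine ⟨u', c', hc'', hperm.trans ?_⟩
    rw [← reverse_append, edges_reverse, List.map_reverse]
    exact List.reverse_perm _
  · refine hc.exists_typeAFlip_of_isOutside fun e he => ?_
    rw [edges_append, List.mem_append] at he
    exact he.elim (hPout e) (hQout e)

/-- A cycle through both `v1` and `v2` is split there; any other cycle has all its edges
on one side of `H`. -/
theorem IsCycle.exists_typeAFlip (hne : v1 ≠ v2) (h1 : v1 ∈ H) (h2 : v2 ∈ H)
    (hG : PairSeparates G v1 v2 H) {c : G.Walk u u} (hc : c.IsCycle) :
    ∃ u', ∃ c' : (typeAFlip G v1 v2 H).Walk u' u', c'.IsCycle ∧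
      c'.edges.Perm (c.edges.map (phiA v1 v2 H)) := by
  by_cases hS : v1 ∈ c.support ∧ v2 ∈ c.support
  · obtain ⟨hv1, hv2⟩ := hS
    have hv2' : v2 ∈ (c.rotate v1 hv1).support := (c.mem_support_rotate_iff v1 hv1).mpr hv2
    have hc' := hc.rotate hv1
    rw [← (c.rotate v1 hv1).take_spec hv2'] at hc'
    obtain ⟨u', c', hc'', hperm⟩ := hc'.exists_typeAFlip_of_split hne h1 h2 hG
    refine ⟨u', c', hc'', hperm.trans ?_⟩
    rw [take_spec]
    exact (c.rotate_edges v1 hv1).perm.map _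
  · obtain ⟨w, hw, hwS⟩ : ∃ w ∈ c.support, ∀ x ∈ c.support, x = v1 ∨ x = v2 → x = w := by
      by_cases hv1 : v1 ∈ c.support
      · exact ⟨v1, hv1, fun x hx hxS => hxS.resolve_right fun hx2 => hS ⟨hv1, hx2 ▸ hx⟩⟩
      by_cases hv2 : v2 ∈ c.support
      · exact ⟨v2, hv2, fun x hx hxS => hxS.resolve_left fun hx1 => hv1 (hx1 ▸ hx)⟩
      · refine ⟨u, c.start_mem_support, fun x hx hxS => ?_⟩
        rcases hxS with rfl | rfl <;> contradiction
    rcases hc.isInside_or_isOutside hG hw hwS with hin | hout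
    exacts [hc.exists_typeAFlip_of_isInside hin, hc.exists_typeAFlip_of_isOutside hout]

theorem IsCycle.exists_typeAFlip_image (hne : v1 ≠ v2) (h1 : v1 ∈ H) (h2 : v2 ∈ H)
    (hG : PairSeparates G v1 v2 H) {c : G.Walk u u} (hc : c.IsCycle) :
    ∃ u', ∃ c' : (typeAFlip G v1 v2 H).Walk u' u', c'.IsCycle ∧
      phiA v1 v2 H '' {f | f ∈ c.edges} = {f | f ∈ c'.edges} ∧ c'.length = c.length := by
  obtain ⟨u', c', hc', hperm⟩ := hc.exists_typeAFlip hne h1 h2 hG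
  refine ⟨u', c', hc', ?_, ?_⟩
  · ext f
    simp [hperm.mem_iff]
  · rw [← length_edges, ← length_edges, hperm.length_eq, List.length_map]

theorem IsCycle.exists_image_of_typeAFlip (hne : v1 ≠ v2) (h1 : v1 ∈ H) (h2 : v2 ∈ H)
    (hG : PairSeparates G v1 v2 H) {c : (typeAFlip G v1 v2 H).Walk u u} (hc : c.IsCycle) :
    ∃ u', ∃ c' : G.Walk u' u', c'.IsCycle ∧
      phiA v1 v2 H '' {f | f ∈ c.edges} = {f | f ∈ c'.edges} ∧ c'.length = c.length := by
  have := hc.exists_typeAFlip_image hne h1 h2 (hG.typeAFlip h1 h2)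
  rwa [typeAFlip_typeAFlip h1 h2] at this

end SimpleGraph.Walk

end

theorem phiA_edge_bijection_cycles_general {V : Type*} [DecidableEq V] (G : SimpleGraph V)
    (v1 v2 : V) (hne : v1 ≠ v2)
    (H : Set V) (h1 : v1 ∈ H) (h2 : v2 ∈ H)
    (hHedge : ∀ x y : V, G.Adj x y → x ∈ H \ ({v1, v2} : Set V) → y ∈ H) :
    Set.BijOn (phiA v1 v2 H) G.edgeSet (typeAFlip G v1 v2 H).edgeSet ∧
      (∀ C : Set (Sym2 V), C ⊆ G.edgeSet →
        ((∃ u : V, ∃ c : G.Walk u u, c.IsCycle ∧ C = {f | f ∈ c.edges}) ↔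
          (∃ u : V, ∃ c : (typeAFlip G v1 v2 H).Walk u u, c.IsCycle ∧
            phiA v1 v2 H '' C = {f | f ∈ c.edges}))) ∧
      (∀ k : ℕ, (∃ u : V, ∃ c : G.Walk u u, c.IsCycle ∧ c.length = k) ↔
        (∃ u : V, ∃ c : (typeAFlip G v1 v2 H).Walk u u, c.IsCycle ∧ c.length = k)) := by
  refine ⟨bijOn_phiA_edgeSet h1 h2, fun C _ => ⟨?_, ?_⟩, fun k => ⟨?_, ?_⟩⟩
  · rintro ⟨u, c, hc, rfl⟩
    obtain ⟨u', c', hc', hE, -⟩ := hc.exists_typeAFlip_image hne h1 h2 hHedge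
    exact ⟨u', c', hc', hE⟩
  · rintro ⟨u, c, hc, hC⟩
    obtain ⟨u', c', hc', hE, -⟩ := hc.exists_image_of_typeAFlip hne h1 h2 hHedge
    refine ⟨u', c', hc', ?_⟩
    rw [← hE, ← hC, ((phiA_involutive h1 h2).leftInverse.leftInvOn C).image_image]
  · rintro ⟨u, c, hc, rfl⟩
    obtain ⟨u', c', hc', -, hl⟩ := hc.exists_typeAFlip_image hne h1 h2 hHedge
    exact ⟨u', c', hc', hl⟩
  · rintro ⟨u, c, hc, rfl⟩
    obtain ⟨u', c', hc', -, hl⟩ := hc.exists_image_of_typeAFlip hne h1 h2 hHedge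
    exact ⟨u', c', hc', hl⟩

/-- the edge map `phiA` of the Type A Whitney flip is a bijection from the
edge set of `G` onto the edge set of the flipped graph; a set `C` of edges of `G` is the
edge set of a cycle of `G` iff its image is the edge set of a cycle of the flipped graph;
in particular both graphs have cycles of exactly the same lengths. -/
theorem phiA_edge_bijection_cycles {V : Type*} [DecidableEq V] (G : SimpleGraph V)
    (v1 v2 : V) (hne : v1 ≠ v2) (hadj : G.Adj v1 v2)
    (H : Set V) (h1 : v1 ∈ H) (h2 : v2 ∈ H) (hHconn : (G.induce H).Connected)
    (hHedge : ∀ x y : V, G.Adj x y → x ∈ H \ ({v1, v2} : Set V) → y ∈ H) :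
    Set.BijOn (phiA v1 v2 H) G.edgeSet (typeAFlip G v1 v2 H).edgeSet ∧
      (∀ C : Set (Sym2 V), C ⊆ G.edgeSet →
        ((∃ u : V, ∃ c : G.Walk u u, c.IsCycle ∧ C = {f | f ∈ c.edges}) ↔
          (∃ u : V, ∃ c : (typeAFlip G v1 v2 H).Walk u u, c.IsCycle ∧
            phiA v1 v2 H '' C = {f | f ∈ c.edges}))) ∧
      (∀ k : ℕ, (∃ u : V, ∃ c : G.Walk u u, c.IsCycle ∧ c.length = k) ↔
        (∃ u : V, ∃ c : (typeAFlip G v1 v2 H).Walk u u, c.IsCycle ∧ c.length = k)) :=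
  phiA_edge_bijection_cycles_general G v1 v2 hne H h1 h2 hHedge
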